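/- Let x̄ ∈ (0,1) be an interior point that is not an equilibrium of the uncontrolled replicator equation, i.e., (a+d−b−c)·x̄ + b − d ≠ 0. Let φ : ℝ → ℝ be continuously differentiable, let (γ₁, γ₂) be any of (1,0), (0,1), (−1,0), (0,−1), and let (x, g) be a solution of the controlled replicator equation with x(0) ∈ (0,1) and g(0) > 0. If g(t) → 0 as t → ∞, then x(t) does not converge to x̄ as t → ∞. -/

import Mathlib

/-- `(x, g)` is a solution of the controlled replicator equation
`ẋ = x(1−x)((a+d−b−c)x + b − d + γ₁ g x + γ₂ g (1−x))`, `ġ = φ(x) g` on `[0,∞)`. -/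
def IsControlledSolution (a b c d γ₁ γ₂ : ℝ) (φ : ℝ → ℝ) (x g : ℝ → ℝ) : Prop :=
  ∀ t : ℝ, 0 ≤ t →
    HasDerivAt x
      (x t * (1 - x t) *
        ((a + d - b - c) * x t + (b - d) + γ₁ * g t * x t + γ₂ * g t * (1 - x t))) t ∧
    HasDerivAt g (φ (x t) * g t) t

/-!
If `x → x̄` and `g → 0`, the right-hand side of `ẋ` tends to `x̄(1−x̄)((a+d−b−c)x̄ + b − d)`,
which is nonzero because `x̄` is an interior non-equilibrium. So `ẋ` eventually stays
bounded away from zero with a fixed sign, and `x` grows or decays at least linearly,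
contradicting convergence.
-/

open Filter Topology

theorem tendsto_atTop_of_le_hasDerivAt {f f' : ℝ → ℝ} {T k : ℝ} (hk : 0 < k)
    (hf : ∀ t, T ≤ t → HasDerivAt f (f' t) t) (hf' : ∀ t, T ≤ t → k ≤ f' t) :
    Tendsto f atTop atTop := by
  have hgrowth : ∀ t, T ≤ t → k * (t - T) ≤ f t - f T := fun t ht =>
    (convex_Ici T).mul_sub_le_image_sub_of_le_deriv
      (fun s hs => (hf s hs).continuousAt.continuousWithinAt)
      (fun s hs => (hf s (interior_subset hs)).differentiableAt.differentiableWithinAt)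
      (fun s hs => (hf s (interior_subset hs)).deriv ▸ hf' s (interior_subset hs))
      T Set.self_mem_Ici t ht ht
  have hlinear : Tendsto (fun t => f T + k * (t - T)) atTop atTop :=
    tendsto_atTop_add_const_left _ _
      ((tendsto_atTop_add_const_right _ _ tendsto_id).const_mul_atTop hk)
  exact tendsto_atTop_mono' _
    ((eventually_ge_atTop T).mono fun t ht => by linarith [hgrowth t ht]) hlinear

theorem not_tendsto_nhds_of_hasDerivAt_of_tendsto_pos {f f' : ℝ → ℝ} {c L : ℝ} (hc : 0 < c)
    (hf : ∀ᶠ t in atTop, HasDerivAt f (f' t) t) (hf' : Tendsto f' atTop (𝓝 c)) :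
    ¬ Tendsto f atTop (𝓝 L) := by
  obtain ⟨T, hT⟩ :=
    (hf.and (hf'.eventually (eventually_ge_nhds (half_lt_self hc)))).exists_forall_of_atTop
  exact not_tendsto_nhds_of_tendsto_atTop
    (tendsto_atTop_of_le_hasDerivAt (half_pos hc) (fun t ht => (hT t ht).1)
      (fun t ht => (hT t ht).2)) L

theorem not_tendsto_nhds_of_hasDerivAt_of_tendsto {f f' : ℝ → ℝ} {c L : ℝ} (hc : c ≠ 0)
    (hf : ∀ᶠ t in atTop, HasDerivAt f (f' t) t) (hf' : Tendsto f' atTop (𝓝 c)) :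
    ¬ Tendsto f atTop (𝓝 L) := by
  rcases hc.lt_or_gt with hneg | hpos
  · intro hL
    exact not_tendsto_nhds_of_hasDerivAt_of_tendsto_pos (neg_pos.2 hneg)
      (hf.mono fun t ht => ht.neg) hf'.neg hL.neg
  · exact not_tendsto_nhds_of_hasDerivAt_of_tendsto_pos hpos hf hf'

theorem no_vanishing_gain_setpoint_general (a b c d γ₁ γ₂ xbar : ℝ)
    (hxbar : xbar ∈ Set.Ioo (0 : ℝ) 1) (hne : (a + d - b - c) * xbar + (b - d) ≠ 0)
    (φ : ℝ → ℝ)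
    (x g : ℝ → ℝ) (hsol : IsControlledSolution a b c d γ₁ γ₂ φ x g)
    (hgain : Filter.Tendsto g Filter.atTop (nhds 0)) :
    ¬ Filter.Tendsto x Filter.atTop (nhds xbar) := by
  intro hx
  have hfield : Continuous fun p : ℝ × ℝ => p.1 * (1 - p.1) *
      ((a + d - b - c) * p.1 + (b - d) + γ₁ * p.2 * p.1 + γ₂ * p.2 * (1 - p.1)) := by
    fun_prop
  have hvelocity : Tendsto (fun t => x t * (1 - x t) *
      ((a + d - b - c) * x t + (b - d) + γ₁ * g t * x t + γ₂ * g t * (1 - x t))) atTop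
      (𝓝 (xbar * (1 - xbar) * ((a + d - b - c) * xbar + (b - d)))) := by
    simpa [Function.comp_def] using (hfield.tendsto (xbar, 0)).comp (hx.prodMk_nhds hgain)
  have hlimit_ne : xbar * (1 - xbar) * ((a + d - b - c) * xbar + (b - d)) ≠ 0 :=
    mul_ne_zero (mul_ne_zero hxbar.1.ne' (sub_ne_zero.2 hxbar.2.ne')) hne
  exact not_tendsto_nhds_of_hasDerivAt_of_tendsto hlimit_ne
    ((eventually_ge_atTop 0).mono fun t ht => (hsol t ht).1) hvelocity hx

/-- If `xbar ∈ (0,1)` is not an equilibrium of the uncontrolled replicator equation, then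
no adaptive-gain controller whose gain vanishes asymptotically can steer the state
to `xbar`. -/
theorem no_vanishing_gain_setpoint (a b c d γ₁ γ₂ xbar : ℝ)
    (hxbar : xbar ∈ Set.Ioo (0 : ℝ) 1) (hne : (a + d - b - c) * xbar + (b - d) ≠ 0)
    (φ : ℝ → ℝ) (hφ : ContDiff ℝ 1 φ)
    (hγ : (γ₁, γ₂) = (1, 0) ∨ (γ₁, γ₂) = (0, 1) ∨ (γ₁, γ₂) = (-1, 0) ∨ (γ₁, γ₂) = (0, -1))
    (x g : ℝ → ℝ) (hsol : IsControlledSolution a b c d γ₁ γ₂ φ x g)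
    (hx0 : x 0 ∈ Set.Ioo (0 : ℝ) 1) (hg0 : 0 < g 0)
    (hgain : Filter.Tendsto g Filter.atTop (nhds 0)) :
    ¬ Filter.Tendsto x Filter.atTop (nhds xbar) :=
  no_vanishing_gain_setpoint_general a b c d γ₁ γ₂ xbar hxbar hne φ x g hsol hgain
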